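/- For a T0 space X, the following are equivalent: (1) X is well-filtered; (2) every closed well-filtered determined subset of X is the closure of a single point; (3) every closed Rudin subset of X is the closure of a single point. -/

import Mathlib

open Set

universe u

variable {α : Type u}

/-- The specialization order used in the paper: `x ≤ y` iff `x ∈ closure {y}`. -/
def specLE [TopologicalSpace α] (x y : α) : Prop := x ∈ closure ({y} : Set α)

/-- `↑x = {y | x ≤ y}` in the specialization order. -/
def upOf [TopologicalSpace α] (x : α) : Set α := {y | specLE x y}

/-- `↑F = {y | ∃ a ∈ F, a ≤ y}` in the specialization order. -/
def upSetOf [TopologicalSpace α] (F : Set α) : Set α := {y | ∃ a ∈ F, specLE a y}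

/-- `↓B = {x | ∃ b ∈ B, x ≤ b}` in the specialization order. -/
def downOf [TopologicalSpace α] (B : Set α) : Set α := {x | ∃ b ∈ B, specLE x b}

/-- A set directed with respect to the specialization order: nonempty, and any two
elements have an upper bound in it. -/
def SDirected [TopologicalSpace α] (D : Set α) : Prop :=
  D.Nonempty ∧ ∀ a ∈ D, ∀ b ∈ D, ∃ c ∈ D, specLE a c ∧ specLE b c

/-- `s` is a supremum (least upper bound) of `D` in the specialization order. -/
def SIsSup [TopologicalSpace α] (D : Set α) (s : α) : Prop :=
  (∀ d ∈ D, specLE d s) ∧ ∀ t : α, (∀ d ∈ D, specLE d t) → specLE s t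

/-- Upper set (= saturated set) in the specialization order. -/
def SUpper [TopologicalSpace α] (A : Set α) : Prop :=
  ∀ ⦃x y : α⦄, x ∈ A → specLE x y → y ∈ A

/-- Scott open set with respect to the specialization order. -/
def SScottOpen [TopologicalSpace α] (U : Set α) : Prop :=
  SUpper U ∧ ∀ D : Set α, SDirected D → ∀ s : α, SIsSup D s → s ∈ U → (D ∩ U).Nonempty

/-- A d-space: a dcpo under the specialization order, all open sets Scott open. -/
def IsDSpace (α : Type u) [TopologicalSpace α] : Prop :=
  (∀ D : Set α, SDirected D → ∃ s : α, SIsSup D s) ∧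
    ∀ U : Set α, IsOpen U → SScottOpen U

/-- Member of `K(X)`: nonempty, compact and saturated. -/
def IsKSet [TopologicalSpace α] (K : Set α) : Prop :=
  K.Nonempty ∧ IsCompact K ∧ SUpper K

/-- A filtered family of sets: nonempty, and any two members contain a common member. -/
def FilteredFam (𝒦 : Set (Set α)) : Prop :=
  𝒦.Nonempty ∧ ∀ K1 ∈ 𝒦, ∀ K2 ∈ 𝒦, ∃ K3 ∈ 𝒦, K3 ⊆ K1 ∩ K2

/-- Well-filtered space: for every filtered family of nonempty compact saturated sets whose
intersection is contained in an open `U`, some member is contained in `U`. -/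
def IsWellFiltered (α : Type u) [TopologicalSpace α] : Prop :=
  ∀ 𝒦 : Set (Set α), (∀ K ∈ 𝒦, IsKSet K) → FilteredFam 𝒦 →
    ∀ U : Set α, IsOpen U → ⋂₀ 𝒦 ⊆ U → ∃ K ∈ 𝒦, K ⊆ U

/-- Rudin set: a nonempty set `A` such that for some filtered family `𝒦 ⊆ K(X)`,
`closure A` is a minimal closed set meeting every member of `𝒦`. -/
def IsRudin [TopologicalSpace α] (A : Set α) : Prop :=
  A.Nonempty ∧ ∃ 𝒦 : Set (Set α), (∀ K ∈ 𝒦, IsKSet K) ∧ FilteredFam 𝒦 ∧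
    (∀ K ∈ 𝒦, (closure A ∩ K).Nonempty) ∧
    ∀ B : Set α, IsClosed B → B ⊆ closure A → (∀ K ∈ 𝒦, (B ∩ K).Nonempty) → B = closure A

/-- Well-filtered determined set: every continuous map into a well-filtered T0 space sends it
to a set whose closure is the closure of a unique point. -/
def IsWFD [TopologicalSpace α] (A : Set α) : Prop :=
  ∀ (Y : Type u) [TopologicalSpace Y] [T0Space Y], IsWellFiltered Y →
    ∀ f : α → Y, Continuous f → ∃! y : Y, closure (f '' A) = closure ({y} : Set Y)

/-- Irreducible set. -/
def IsIrred [TopologicalSpace α] (A : Set α) : Prop :=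
  A.Nonempty ∧ ∀ F1 F2 : Set α, IsClosed F1 → IsClosed F2 → A ⊆ F1 ∪ F2 → A ⊆ F1 ∨ A ⊆ F2

/-- Sober space: every irreducible closed set is the closure of a unique point. -/
def IsSober (α : Type u) [TopologicalSpace α] : Prop :=
  ∀ A : Set α, IsClosed A → IsIrred A → ∃! x : α, A = closure ({x} : Set α)

/-- `A` has a maximal element with respect to the specialization order. -/
def HasMaxElem [TopologicalSpace α] (A : Set α) : Prop :=
  ∃ m ∈ A, ∀ a ∈ A, specLE m a → a = m

/-- Strong d-space. -/
def IsStrongDSpace (α : Type u) [TopologicalSpace α] : Prop :=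
  ∀ D : Set α, SDirected D → ∀ x : α, ∀ U : Set α, IsOpen U →
    (⋂ d ∈ D, upOf d) ∩ upOf x ⊆ U → ∃ d ∈ D, upOf d ∩ upOf x ⊆ U

/-!
If `X` is not well-filtered, witnessed by a filtered `𝒦 ⊆ K(X)` and an open `U ⊇ ⋂ 𝒦` containing
no member of `𝒦`, then Zorn's lemma gives a closed `C ⊆ X \ U` minimal among closed sets meeting
every member of `𝒦` (compactness lets the intersection of a chain of such sets still meet every
member). `C` is a Rudin set, and if `C = closure {x}` then `x` lies in every saturated member of
`𝒦`, hence in `U`: a contradiction.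

Conversely, in a well-filtered space a Rudin set `A` with family `𝒦` has a point
`y ∈ closure A ∩ ⋂ 𝒦`, and minimality forces `closure A = closure {y}`. Pushing `𝒦` forward and
saturating shows that continuous images of Rudin sets are Rudin, so Rudin sets are well-filtered
determined.
-/

lemma FilteredFam.image {β : Type*} {𝒦 : Set (Set α)} (h : FilteredFam 𝒦) {g : Set α → Set β}
    (hg : Monotone g) : FilteredFam (g '' 𝒦) := by
  refine ⟨h.1.image g, ?_⟩
  rintro _ ⟨K₁, hK₁, rfl⟩ _ ⟨K₂, hK₂, rfl⟩
  obtain ⟨K₃, hK₃, hsub⟩ := h.2 K₁ hK₁ K₂ hK₂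
  exact ⟨g K₃, mem_image_of_mem g hK₃,
    subset_inter (hg (hsub.trans inter_subset_left)) (hg (hsub.trans inter_subset_right))⟩

section

variable [TopologicalSpace α] {β : Type*} [TopologicalSpace β]

lemma specLE_refl (x : α) : specLE x x := subset_closure rfl

lemma specLE_trans {x y z : α} (hxy : specLE x y) (hyz : specLE y z) : specLE x z :=
  specializes_iff_mem_closure.1
    ((specializes_iff_mem_closure.2 hyz).trans (specializes_iff_mem_closure.2 hxy))

lemma IsOpen.sUpper {U : Set α} (hU : IsOpen U) : SUpper U :=
  fun _ _ hx hxy => (specializes_iff_mem_closure.2 hxy).mem_open hU hx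

lemma IsClosed.mem_of_specLE {C : Set α} (hC : IsClosed C) {x y : α} (hy : y ∈ C)
    (hxy : specLE x y) : x ∈ C :=
  hC.closure_subset_iff.2 (singleton_subset_iff.2 hy) hxy

lemma subset_upSetOf (S : Set α) : S ⊆ upSetOf S :=
  fun a ha => ⟨a, ha, specLE_refl a⟩

lemma sUpper_upSetOf (S : Set α) : SUpper (upSetOf S) := by
  rintro x y ⟨a, haS, hax⟩ hxy
  exact ⟨a, haS, specLE_trans hax hxy⟩

lemma upSetOf_mono {S T : Set α} (h : S ⊆ T) : upSetOf S ⊆ upSetOf T := by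
  rintro y ⟨a, haS, hay⟩
  exact ⟨a, h haS, hay⟩

lemma upSetOf_subset_of_isOpen {S U : Set α} (hU : IsOpen U) (h : S ⊆ U) : upSetOf S ⊆ U := by
  rintro y ⟨a, haS, hay⟩
  exact hU.sUpper (h haS) hay

lemma IsCompact.upSetOf {S : Set α} (hS : IsCompact S) : IsCompact (upSetOf S) := by
  refine isCompact_of_finite_subcover fun U hU hcov => ?_
  obtain ⟨t, ht⟩ := hS.elim_finite_subcover U hU ((subset_upSetOf S).trans hcov)
  exact ⟨t, upSetOf_subset_of_isOpen (isOpen_biUnion fun i _ => hU i) ht⟩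

lemma isKSet_upSetOf {S : Set α} (hne : S.Nonempty) (hS : IsCompact S) : IsKSet (upSetOf S) :=
  ⟨hne.mono (subset_upSetOf S), hS.upSetOf, sUpper_upSetOf S⟩

lemma IsCompact.inter_sInter_nonempty_of_isChain {K : Set α} (hK : IsCompact K)
    {c : Set (Set α)} (hc : IsChain (· ⊆ ·) c) (hcne : c.Nonempty)
    (hcl : ∀ C ∈ c, IsClosed C) (hmeet : ∀ C ∈ c, (C ∩ K).Nonempty) :
    (K ∩ ⋂₀ c).Nonempty := by
  have := hcne.coe_sort
  have hdir : DirectedOn (· ⊇ ·) c := IsChain.directedOn (r := fun s t : Set α => s ⊇ t) hc.symm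
  rw [sInter_eq_iInter, nonempty_iff_ne_empty]
  intro h
  obtain ⟨C, hC⟩ := hK.elim_directed_family_closed (fun C : c => (C : Set α))
    (fun C => hcl C C.2) h hdir.directed_val
  exact (hmeet C C.2).ne_empty (by rwa [inter_comm])

lemma exists_minimal_isClosed_inter_nonempty {𝒦 : Set (Set α)} (h𝒦 : ∀ K ∈ 𝒦, IsCompact K)
    {F : Set α} (hF : IsClosed F) (hFmeet : ∀ K ∈ 𝒦, (F ∩ K).Nonempty) :
    ∃ C ⊆ F, Minimal (fun C => IsClosed C ∧ ∀ K ∈ 𝒦, (C ∩ K).Nonempty) C := by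
  refine zorn_superset_nonempty {C | IsClosed C ∧ ∀ K ∈ 𝒦, (C ∩ K).Nonempty}
    (fun c hcS hc hcne => ?_) F ⟨hF, hFmeet⟩
  refine ⟨⋂₀ c, ⟨isClosed_sInter fun C hC => (hcS hC).1, fun K hK => ?_⟩,
    fun C hC => sInter_subset_of_mem hC⟩
  rw [inter_comm]
  exact (h𝒦 K hK).inter_sInter_nonempty_of_isChain hc hcne (fun C hC => (hcS hC).1)
    fun C hC => (hcS hC).2 K hK

lemma isRudin_of_minimal {𝒦 : Set (Set α)} (h𝒦 : ∀ K ∈ 𝒦, IsKSet K) (hfil : FilteredFam 𝒦)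
    {C : Set α} (hC : Minimal (fun C => IsClosed C ∧ ∀ K ∈ 𝒦, (C ∩ K).Nonempty) C) :
    IsRudin C := by
  obtain ⟨⟨hCcl, hCmeet⟩, hCmin⟩ := hC
  obtain ⟨K, hK⟩ := hfil.1
  refine ⟨(hCmeet K hK).mono inter_subset_left, 𝒦, h𝒦, hfil, ?_, fun B hB hBC hBmeet => ?_⟩
  · rwa [hCcl.closure_eq]
  · rw [hCcl.closure_eq] at hBC ⊢
    exact hBC.antisymm (hCmin ⟨hB, hBmeet⟩ hBC)

theorem isWellFiltered_of_forall_isRudin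
    (h : ∀ A : Set α, IsClosed A → IsRudin A → ∃ x : α, A = closure {x}) :
    IsWellFiltered α := by
  intro 𝒦 h𝒦 hfil U hU hsub
  by_contra! hcon
  have hUc : ∀ K ∈ 𝒦, (Uᶜ ∩ K).Nonempty := fun K hK =>
    let ⟨x, hxK, hxU⟩ := not_subset.1 (hcon K hK)
    ⟨x, hxU, hxK⟩
  obtain ⟨C, hCU, hCmin⟩ :=
    exists_minimal_isClosed_inter_nonempty (fun K hK => (h𝒦 K hK).2.1) hU.isClosed_compl hUc
  obtain ⟨x, rfl⟩ := h C hCmin.prop.1 (isRudin_of_minimal h𝒦 hfil hCmin)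
  have hx𝒦 : x ∈ ⋂₀ 𝒦 := fun K hK =>
    let ⟨_, hax, haK⟩ := hCmin.prop.2 K hK
    (h𝒦 K hK).2.2 haK hax
  exact hCU (subset_closure rfl) (hsub hx𝒦)

theorem IsWellFiltered.exists_closure_eq_of_isRudin (hX : IsWellFiltered α) {A : Set α}
    (hA : IsRudin A) : ∃ y : α, closure A = closure {y} := by
  obtain ⟨-, 𝒦, h𝒦, hfil, hmeet, hmin⟩ := hA
  obtain ⟨y, hy𝒦, hyA⟩ : ∃ y ∈ ⋂₀ 𝒦, y ∈ closure A := by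
    by_contra! h
    obtain ⟨K, hK, hKA⟩ := hX 𝒦 h𝒦 hfil _ isClosed_closure.isOpen_compl h
    obtain ⟨x, hxA, hxK⟩ := hmeet K hK
    exact hKA hxK hxA
  refine ⟨y, (hmin (closure {y}) isClosed_closure ?_ fun K hK => ?_).symm⟩
  · exact closure_minimal (singleton_subset_iff.2 hyA) isClosed_closure
  · exact ⟨y, subset_closure (mem_singleton y), hy𝒦 K hK⟩

theorem IsRudin.image {A : Set α} (hA : IsRudin A) {f : α → β} (hf : Continuous f) :
    IsRudin (f '' A) := by
  obtain ⟨hAne, 𝒦, h𝒦, hfil, hmeet, hmin⟩ := hA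
  let g : Set α → Set β := fun K => upSetOf (f '' (K ∩ closure A))
  have hg : Monotone g := fun _ _ h => upSetOf_mono (image_mono (inter_subset_inter_left _ h))
  refine ⟨hAne.image f, g '' 𝒦, ?_, hfil.image hg, ?_, fun B hB hBA hBmeet => ?_⟩
  · rintro _ ⟨K, hK, rfl⟩
    obtain ⟨a, haA, haK⟩ := hmeet K hK
    exact isKSet_upSetOf ⟨f a, a, ⟨haK, haA⟩, rfl⟩
      (((h𝒦 K hK).2.1.inter_right isClosed_closure).image hf)
  · rintro _ ⟨K, hK, rfl⟩
    obtain ⟨a, haA, haK⟩ := hmeet K hK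
    exact ⟨f a, image_closure_subset_closure_image hf ⟨a, haA, rfl⟩,
      subset_upSetOf _ ⟨a, ⟨haK, haA⟩, rfl⟩⟩
  have hpre : f ⁻¹' B ∩ closure A = closure A := by
    refine hmin _ ((hB.preimage hf).inter isClosed_closure) inter_subset_right fun K hK => ?_
    obtain ⟨b, hbB, _, ⟨a, ⟨haK, haA⟩, rfl⟩, hab⟩ := hBmeet (g K) ⟨K, hK, rfl⟩
    exact ⟨a, ⟨hB.mem_of_specLE hbB hab, haA⟩, haK⟩
  refine hBA.antisymm (closure_minimal ?_ hB)
  rintro _ ⟨a, ha, rfl⟩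
  exact (hpre.superset (subset_closure ha)).1

theorem IsRudin.isWFD {A : Set α} (hA : IsRudin A) : IsWFD A := by
  intro Y _ _ hY f hf
  obtain ⟨y, hy⟩ := hY.exists_closure_eq_of_isRudin (hA.image hf)
  exact ⟨y, hy, fun y' hy' => (inseparable_iff_closure_eq.2 (hy'.symm.trans hy)).eq⟩

end

/-- characterizations of well-filtered spaces. -/
theorem stmt_9 (α : Type u) [TopologicalSpace α] [T0Space α] :
    List.TFAE
      [ IsWellFiltered α,
        ∀ A : Set α, IsClosed A → IsWFD A → ∃ x : α, A = closure ({x} : Set α),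
        ∀ A : Set α, IsClosed A → IsRudin A → ∃ x : α, A = closure ({x} : Set α) ] := by
  tfae_have 1 → 2 := fun h A hA hWFD => by
    obtain ⟨x, hx, -⟩ := hWFD α h id continuous_id
    exact ⟨x, by rwa [image_id, hA.closure_eq] at hx⟩
  tfae_have 2 → 3 := fun h A hA hR => h A hA hR.isWFD
  tfae_have 3 → 1 := isWellFiltered_of_forall_isRudin
  tfae_finish
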